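/- Let $c_i \ge 0$ with $\sum_{i=1}^N c_i = 1$, and let $g_1, \dots, g_N$ be measurable functions on $\mathbb{R}$ with $\|g_i\|_{L^{1,\infty}} \le 1$ for all $i$. Then $\|\sum_{i=1}^N c_i g_i\|_{L^{1,\infty}} \le C(1 + \sum_{i=1}^N c_i \log(1/c_i))$ for an absolute constant $C$. In particular, if $c_i = 1/N$ for all $i$, then $\|\frac{1}{N}\sum_i g_i\|_{L^{1,\infty}} \le C(1 + \log N)$. -/

import Mathlib

open MeasureTheory Set
open scoped ENNReal

/-- The weak-`L¹` quasinorm of a real-valued function on `ℝ`. -/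
noncomputable def weakL1 (h : ℝ → ℝ) : ℝ≥0∞ :=
  ⨆ (lam : ℝ) (_ : 0 < lam), ENNReal.ofReal lam * volume {x | lam < |h x|}

/-!
Fix a level `λ = 2t`. For `cᵢ > 0` choose `Kᵢ ≈ log₂ (1 / cᵢ)` with `cᵢ 2^Kᵢ ≥ 1`. By the
weak bound, the set where `|gᵢ| > t 2^Kᵢ` has measure at most `2cᵢ / λ`, so these exceptional
sets together have measure at most `2 / λ`. Below that height
`|gᵢ| ≤ t + ∑_{k<Kᵢ} t 2^k 𝟙{|gᵢ| > t 2^k}`, a sum of `Kᵢ` dyadic layers of integral at most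
`1` each. So off the exceptional sets `|∑ cᵢ gᵢ| ≤ t + G` with `∫ G ≤ ∑ cᵢ Kᵢ`, and Markov's
inequality for `G` at height `t` gives
`λ |{|∑ cᵢ gᵢ| > λ}| ≤ 2 ∑ cᵢ (1 + Kᵢ) ≤ 4 (1 + ∑ cᵢ log (1 / cᵢ))`.
-/

theorem le_add_sum_dyadic_of_le_mul_two_pow {t y : ℝ} (ht : 0 ≤ t) :
    ∀ K : ℕ, y ≤ t * 2 ^ K →
      y ≤ t + ∑ k ∈ Finset.range K, if t * 2 ^ k < y then t * 2 ^ k else 0 := by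
  intro K
  induction K with
  | zero => simp
  | succ K ih =>
    intro hy
    rw [Finset.sum_range_succ]
    rcases le_or_gt y (t * 2 ^ K) with hyK | hyK
    · have hlast : 0 ≤ if t * 2 ^ K < y then t * 2 ^ K else 0 := by split_ifs <;> positivity
      linarith [ih hyK]
    · -- all levels up to `K` lie below `y`, and they sum to `t * (2 ^ (K + 1) - 1)`
      have hall : ∀ k ∈ Finset.range (K + 1),
          (if t * 2 ^ k < y then t * 2 ^ k else 0) = t * 2 ^ k := fun k hk =>
        if_pos <| (mul_le_mul_of_nonneg_left (pow_le_pow_right₀ one_le_two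
          (Nat.lt_succ_iff.mp (Finset.mem_range.mp hk))) ht).trans_lt hyK
      rw [← Finset.sum_range_succ, Finset.sum_congr rfl hall, ← Finset.mul_sum,
        geom_sum_eq (by norm_num : (2 : ℝ) ≠ 1)]
      linarith [pow_succ (2 : ℝ) K]

noncomputable def dyadicLevel (c : ℝ) : ℕ := ⌈Real.logb 2 (1 / c)⌉₊

theorem one_le_mul_two_pow_dyadicLevel {c : ℝ} (hc : 0 < c) : 1 ≤ c * 2 ^ dyadicLevel c := by
  have h : 1 / c ≤ 2 ^ dyadicLevel c := by
    rw [← Real.rpow_natCast, ← Real.logb_le_iff_le_rpow one_lt_two (by positivity)]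
    exact Nat.le_ceil _
  rwa [div_le_iff₀ hc, mul_comm] at h

theorem dyadicLevel_le {c : ℝ} (hc0 : 0 ≤ c) (hc1 : c ≤ 1) :
    (dyadicLevel c : ℝ) ≤ 2 * Real.log (1 / c) + 1 := by
  have hlog : 0 ≤ Real.log (1 / c) := by
    rcases hc0.eq_or_lt with rfl | hc
    · simp
    · exact Real.log_nonneg ((le_div_iff₀ hc).mpr (by linarith))
  have hlog2 : 1 / 2 < Real.log 2 := by linarith [Real.log_two_gt_d9]
  have hlogb : Real.logb 2 (1 / c) ≤ 2 * Real.log (1 / c) := by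
    rw [Real.logb, div_le_iff₀ (by linarith)]
    nlinarith
  have hceil : (dyadicLevel c : ℝ) < Real.logb 2 (1 / c) + 1 :=
    Nat.ceil_lt_add_one (div_nonneg hlog (Real.log_nonneg one_le_two))
  linarith

section Dyadic

variable {α : Type*} [MeasurableSpace α] (μ : Measure α)

/-- The layers are taken over measurable hulls, so that this is measurable although `f` need
not be. -/
noncomputable def dyadicLayers (t : ℝ) (K : ℕ) (f : α → ℝ) (x : α) : ℝ≥0∞ :=
  ∑ k ∈ Finset.range K,
    (toMeasurable μ {y | t * 2 ^ k < |f y|}).indicator (fun _ => ENNReal.ofReal (t * 2 ^ k)) x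

variable {μ}

theorem measurable_dyadicLayers (t : ℝ) (K : ℕ) (f : α → ℝ) :
    Measurable (dyadicLayers μ t K f) :=
  Finset.measurable_sum _ fun _ _ => measurable_const.indicator (measurableSet_toMeasurable _ _)

theorem lintegral_dyadicLayers_le {t : ℝ} (ht : 0 < t) (K : ℕ) {f : α → ℝ}
    (hf : ∀ s, 0 < s → ENNReal.ofReal s * μ {x | s < |f x|} ≤ 1) :
    ∫⁻ x, dyadicLayers μ t K f x ∂μ ≤ K := by
  unfold dyadicLayers
  rw [lintegral_finsetSum _ fun _ _ =>
    measurable_const.indicator (measurableSet_toMeasurable _ _)]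
  calc ∑ k ∈ Finset.range K, ∫⁻ x, (toMeasurable μ {y | t * 2 ^ k < |f y|}).indicator
          (fun _ => ENNReal.ofReal (t * 2 ^ k)) x ∂μ
      ≤ ∑ _k ∈ Finset.range K, (1 : ℝ≥0∞) := by
        gcongr with k
        rw [lintegral_indicator_const (measurableSet_toMeasurable _ _), measure_toMeasurable]
        exact hf _ (by positivity)
    _ = K := by simp

theorem ofReal_abs_le_add_dyadicLayers {t : ℝ} (ht : 0 ≤ t) {K : ℕ} {f : α → ℝ} {x : α}
    (hx : |f x| ≤ t * 2 ^ K) :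
    ENNReal.ofReal |f x| ≤ ENNReal.ofReal t + dyadicLayers μ t K f x := by
  have hlayer : ∀ k, 0 ≤ if t * 2 ^ k < |f x| then t * 2 ^ k else 0 := fun k => by
    split_ifs <;> positivity
  calc ENNReal.ofReal |f x|
      ≤ ENNReal.ofReal (t + ∑ k ∈ Finset.range K,
          if t * 2 ^ k < |f x| then t * 2 ^ k else 0) :=
        ENNReal.ofReal_le_ofReal (le_add_sum_dyadic_of_le_mul_two_pow ht K hx)
    _ = ENNReal.ofReal t + ∑ k ∈ Finset.range K,
          ENNReal.ofReal (if t * 2 ^ k < |f x| then t * 2 ^ k else 0) := by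
        rw [ENNReal.ofReal_add ht (Finset.sum_nonneg fun k _ => hlayer k),
          ENNReal.ofReal_sum_of_nonneg fun k _ => hlayer k]
    _ ≤ ENNReal.ofReal t + dyadicLayers μ t K f x := by
        unfold dyadicLayers
        gcongr with k
        split_ifs with hk
        · rw [indicator_of_mem (subset_toMeasurable μ _ hk)]
        · simp

theorem ofReal_mul_measure_lt_abs_le {f : α → ℝ}
    (hf : ∀ s, 0 < s → ENNReal.ofReal s * μ {x | s < |f x|} ≤ 1)
    {t r c : ℝ} (ht : 0 < t) (hr : 0 < r) (hcr : 1 ≤ c * r) :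
    ENNReal.ofReal t * μ {x | t * r < |f x|} ≤ ENNReal.ofReal c := by
  have hsplit : ENNReal.ofReal t = ENNReal.ofReal (1 / r) * ENNReal.ofReal (t * r) := by
    rw [← ENNReal.ofReal_mul (by positivity)]
    field_simp
  calc ENNReal.ofReal t * μ {x | t * r < |f x|}
      = ENNReal.ofReal (1 / r) * (ENNReal.ofReal (t * r) * μ {x | t * r < |f x|}) := by
        rw [hsplit, mul_assoc]
    _ ≤ ENNReal.ofReal (1 / r) * 1 := by gcongr; exact hf _ (by positivity)
    _ ≤ ENNReal.ofReal c := by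
        rw [mul_one]
        exact ENNReal.ofReal_le_ofReal ((div_le_iff₀ hr).mpr hcr)

variable {ι : Type*} [Fintype ι] {c : ι → ℝ} {g : ι → α → ℝ}

theorem ofReal_abs_sum_le_add_sum_dyadicLayers (hc : ∀ i, 0 ≤ c i) (hc1 : ∑ i, c i = 1)
    {K : ι → ℕ} {t : ℝ} (ht : 0 ≤ t) {x : α} (hx : ∀ i, 0 < c i → |g i x| ≤ t * 2 ^ K i) :
    ENNReal.ofReal |∑ i, c i * g i x|
      ≤ ENNReal.ofReal t + ∑ i, ENNReal.ofReal (c i) * dyadicLayers μ t (K i) (g i) x := by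
  calc ENNReal.ofReal |∑ i, c i * g i x|
      ≤ ENNReal.ofReal (∑ i, c i * |g i x|) := by
        refine ENNReal.ofReal_le_ofReal ((Finset.abs_sum_le_sum_abs _ _).trans_eq ?_)
        simp_rw [abs_mul, abs_of_nonneg (hc _)]
    _ = ∑ i, ENNReal.ofReal (c i) * ENNReal.ofReal |g i x| := by
        rw [ENNReal.ofReal_sum_of_nonneg fun i _ => mul_nonneg (hc i) (abs_nonneg _)]
        simp_rw [ENNReal.ofReal_mul (hc _)]
    _ ≤ ∑ i, ENNReal.ofReal (c i) * (ENNReal.ofReal t + dyadicLayers μ t (K i) (g i) x) := by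
        refine Finset.sum_le_sum fun i _ => ?_
        rcases (hc i).eq_or_lt with hci | hci
        · simp [← hci]
        · gcongr
          exact ofReal_abs_le_add_dyadicLayers ht (hx i hci)
    _ = ENNReal.ofReal t + ∑ i, ENNReal.ofReal (c i) * dyadicLayers μ t (K i) (g i) x := by
        have hsum : ∑ i, ENNReal.ofReal (c i) = 1 := by
          rw [← ENNReal.ofReal_sum_of_nonneg fun i _ => hc i, hc1, ENNReal.ofReal_one]
        simp_rw [mul_add]
        rw [Finset.sum_add_distrib, ← Finset.sum_mul, hsum, one_mul]

theorem ofReal_mul_measure_iUnion_lt_abs_le {K : ι → ℕ} (hK : ∀ i, 0 < c i → 1 ≤ c i * 2 ^ K i)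
    (hg : ∀ i s, 0 < s → ENNReal.ofReal s * μ {x | s < |g i x|} ≤ 1) {t : ℝ} (ht : 0 < t) :
    ENNReal.ofReal t * μ (⋃ i, {x | 0 < c i ∧ t * 2 ^ K i < |g i x|})
      ≤ ∑ i, ENNReal.ofReal (c i) := by
  calc ENNReal.ofReal t * μ (⋃ i, {x | 0 < c i ∧ t * 2 ^ K i < |g i x|})
      ≤ ∑ i, ENNReal.ofReal t * μ {x | 0 < c i ∧ t * 2 ^ K i < |g i x|} := by
        rw [← Finset.mul_sum]
        gcongr
        exact measure_iUnion_fintype_le μ _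
    _ ≤ ∑ i, ENNReal.ofReal (c i) := by
        gcongr with i
        by_cases hci : 0 < c i
        · calc ENNReal.ofReal t * μ {x | 0 < c i ∧ t * 2 ^ K i < |g i x|}
              ≤ ENNReal.ofReal t * μ {x | t * 2 ^ K i < |g i x|} := by
                gcongr
                exact And.right
            _ ≤ ENNReal.ofReal (c i) :=
                ofReal_mul_measure_lt_abs_le (hg i) ht (by positivity) (hK i hci)
        · simp [hci]

theorem ofReal_mul_measure_le_sum_dyadicLayers (K : ι → ℕ)
    (hg : ∀ i s, 0 < s → ENNReal.ofReal s * μ {x | s < |g i x|} ≤ 1) {t : ℝ} (ht : 0 < t) :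
    ENNReal.ofReal t *
        μ {x | ENNReal.ofReal t ≤ ∑ i, ENNReal.ofReal (c i) * dyadicLayers μ t (K i) (g i) x}
      ≤ ∑ i, ENNReal.ofReal (c i) * K i := by
  have hmeas : ∀ i, Measurable fun x => ENNReal.ofReal (c i) * dyadicLayers μ t (K i) (g i) x :=
    fun i => (measurable_dyadicLayers _ _ _).const_mul _
  calc _ ≤ ∫⁻ x, ∑ i, ENNReal.ofReal (c i) * dyadicLayers μ t (K i) (g i) x ∂μ :=
        mul_meas_ge_le_lintegral₀ (Finset.measurable_sum _ fun i _ => hmeas i).aemeasurable _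
    _ = ∑ i, ENNReal.ofReal (c i) * ∫⁻ x, dyadicLayers μ t (K i) (g i) x ∂μ := by
        rw [lintegral_finsetSum _ fun i _ => hmeas i]
        simp_rw [lintegral_const_mul _ (measurable_dyadicLayers _ _ _)]
    _ ≤ ∑ i, ENNReal.ofReal (c i) * K i := by
        gcongr with i
        exact lintegral_dyadicLayers_le ht _ (hg i)

theorem ofReal_two_mul_mul_measure_lt_abs_sum_le (K : ι → ℕ) (hc : ∀ i, 0 ≤ c i)
    (hc1 : ∑ i, c i = 1) (hK : ∀ i, 0 < c i → 1 ≤ c i * 2 ^ K i)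
    (hg : ∀ i s, 0 < s → ENNReal.ofReal s * μ {x | s < |g i x|} ≤ 1) {t : ℝ} (ht : 0 < t) :
    ENNReal.ofReal (2 * t) * μ {x | 2 * t < |∑ i, c i * g i x|}
      ≤ ENNReal.ofReal (2 * ∑ i, c i * (1 + K i)) := by
  set E := ⋃ i, {x | 0 < c i ∧ t * 2 ^ K i < |g i x|}
  set G : α → ℝ≥0∞ := fun x => ∑ i, ENNReal.ofReal (c i) * dyadicLayers μ t (K i) (g i) x
  have hcover : {x | 2 * t < |∑ i, c i * g i x|} ⊆ E ∪ {x | ENNReal.ofReal t ≤ G x} := by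
    intro x hx
    by_cases hxE : x ∈ E
    · exact Or.inl hxE
    have hbound : ENNReal.ofReal |∑ i, c i * g i x| ≤ ENNReal.ofReal t + G x :=
      ofReal_abs_sum_le_add_sum_dyadicLayers hc hc1 ht.le
        fun i hci => not_lt.mp fun h => hxE (mem_iUnion.mpr ⟨i, hci, h⟩)
    refine Or.inr ((ENNReal.add_lt_add_iff_left (ENNReal.ofReal_ne_top (r := t))).mp ?_).le
    rw [← ENNReal.ofReal_add ht.le ht.le, ← two_mul]
    exact ((ENNReal.ofReal_lt_ofReal_iff_of_nonneg (by positivity)).mpr hx).trans_le hbound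
  calc ENNReal.ofReal (2 * t) * μ {x | 2 * t < |∑ i, c i * g i x|}
      ≤ 2 * (ENNReal.ofReal t * μ E + ENNReal.ofReal t * μ {x | ENNReal.ofReal t ≤ G x}) := by
        rw [ENNReal.ofReal_mul zero_le_two, ENNReal.ofReal_ofNat, mul_assoc, ← mul_add]
        gcongr
        exact (measure_mono hcover).trans (measure_union_le _ _)
    _ ≤ 2 * (∑ i, ENNReal.ofReal (c i) + ∑ i, ENNReal.ofReal (c i) * K i) := by
        gcongr
        · exact ofReal_mul_measure_iUnion_lt_abs_le hK hg ht
        · exact ofReal_mul_measure_le_sum_dyadicLayers K hg ht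
    _ = ENNReal.ofReal (2 * ∑ i, c i * (1 + K i)) := by
        rw [ENNReal.ofReal_mul zero_le_two, ENNReal.ofReal_ofNat,
          ENNReal.ofReal_sum_of_nonneg fun i _ => mul_nonneg (hc i) (by positivity),
          ← Finset.sum_add_distrib]
        congr 2 with i
        rw [ENNReal.ofReal_mul (hc i), ENNReal.ofReal_add zero_le_one (Nat.cast_nonneg _),
          ENNReal.ofReal_one, ENNReal.ofReal_natCast, mul_add, mul_one]

end Dyadic

theorem ofReal_mul_volume_le_weakL1 (h : ℝ → ℝ) {s : ℝ} (hs : 0 < s) :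
    ENNReal.ofReal s * volume {x | s < |h x|} ≤ weakL1 h :=
  le_iSup₂_of_le (f := fun s _ => ENNReal.ofReal s * volume {x | s < |h x|}) s hs le_rfl

theorem weakL1_sum_mul_le {ι : Type*} [Fintype ι] {c : ι → ℝ} {g : ι → ℝ → ℝ}
    (hc : ∀ i, 0 ≤ c i) (hc1 : ∑ i, c i = 1) (hg : ∀ i, weakL1 (g i) ≤ 1) :
    weakL1 (fun x => ∑ i, c i * g i x)
      ≤ ENNReal.ofReal (4 * (1 + ∑ i, c i * Real.log (1 / c i))) := by
  refine iSup₂_le fun lam hlam => ?_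
  have hc_le : ∀ i, c i ≤ 1 := fun i =>
    hc1 ▸ Finset.single_le_sum (fun j _ => hc j) (Finset.mem_univ i)
  have hlevel := ofReal_two_mul_mul_measure_lt_abs_sum_le (μ := volume)
    (fun i => dyadicLevel (c i)) hc hc1 (fun i hci => one_le_mul_two_pow_dyadicLevel hci)
    (fun i s hs => (ofReal_mul_volume_le_weakL1 _ hs).trans (hg i)) (half_pos hlam)
  rw [mul_div_cancel₀ _ two_ne_zero] at hlevel
  refine hlevel.trans (ENNReal.ofReal_le_ofReal ?_)
  calc 2 * ∑ i, c i * (1 + dyadicLevel (c i))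
      ≤ 2 * ∑ i, c i * (2 + 2 * Real.log (1 / c i)) := by
        gcongr 2 * ∑ i, c i * ?_ with i
        · exact hc i
        · linarith [dyadicLevel_le (hc i) (hc_le i)]
    _ = 4 * (1 + ∑ i, c i * Real.log (1 / c i)) := by
        have hsplit : ∑ i, c i * (2 + 2 * Real.log (1 / c i))
            = 2 * ∑ i, c i + 2 * ∑ i, c i * Real.log (1 / c i) := by
          rw [Finset.mul_sum, Finset.mul_sum, ← Finset.sum_add_distrib]
          exact Finset.sum_congr rfl fun i _ => by ring
        rw [hsplit, hc1]
        ring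

/-- Stein–Weiss inequality for convex combinations in weak `L¹`:
`‖∑ cᵢ gᵢ‖_{1,∞} ≤ C(1 + ∑ cᵢ log(1/cᵢ))` whenever `‖gᵢ‖_{1,∞} ≤ 1`, `cᵢ ≥ 0`, `∑ cᵢ = 1`;
in particular, for `cᵢ = 1/N` the bound is `C(1 + log N)`. -/
theorem stein_weiss_weak_L1 :
    ∃ C : ℝ, 0 < C ∧
      ((∀ (N : ℕ) (c : Fin N → ℝ) (g : Fin N → ℝ → ℝ),
        (∀ i, 0 ≤ c i) → (∑ i, c i) = 1 → (∀ i, weakL1 (g i) ≤ 1) →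
        weakL1 (fun x => ∑ i, c i * g i x)
          ≤ ENNReal.ofReal (C * (1 + ∑ i, c i * Real.log (1 / c i))))
      ∧ ∀ (N : ℕ) (g : Fin N → ℝ → ℝ), 0 < N → (∀ i, weakL1 (g i) ≤ 1) →
        weakL1 (fun x => (1 / (N : ℝ)) * ∑ i, g i x)
          ≤ ENNReal.ofReal (C * (1 + Real.log N))) := by
  refine ⟨4, by norm_num, fun N c g => weakL1_sum_mul_le, fun N g hN hg => ?_⟩
  have hN0 : (N : ℝ) ≠ 0 := by positivity
  have h := weakL1_sum_mul_le (c := fun _ : Fin N => 1 / (N : ℝ)) (g := g)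
    (fun _ => by positivity) (by simp [hN0]) hg
  simp only [← Finset.mul_sum, one_div_one_div, Finset.sum_const, Finset.card_univ,
    Fintype.card_fin, nsmul_eq_mul] at h
  rwa [← mul_assoc, one_div_mul_cancel hN0, one_mul] at h
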